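/- Let γ_ε be a mollifier on ℝ² and f, g locally integrable functions. Then the commutator between mollification and multiplication satisfies the identity: (f·g)∗γ_ε(x) − (f∗γ_ε)(x)·(g∗γ_ε)(x) = ∫∫_{ℝ²×ℝ²} (f(x−x̄) − f(x)) γ_ε(x̄) (g(x−x̄) − g(x−x')) γ_ε(x') dx' dx̄, for almost every x, provided γ_ε has integral 1. -/

import Mathlib

/-!
Since `∫ γε = 1`, the inner integral over `x'` replaces `g (x - x')` by its average
`(g ∗ γε) x`. Expanding the remaining single integral, the term carrying `f x` is `f x` times
`∫ (g (x - x̄) - (g ∗ γε) x) γε x̄ dx̄ = 0`, and what is left is the commutator.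
-/

open MeasureTheory

noncomputable abbrev E2 := EuclideanSpace ℝ (Fin 2)

/-- Convolution on ℝ². -/
noncomputable def conv2 (f γ : E2 → ℝ) (x : E2) : ℝ := ∫ y, f (x - y) * γ y

section WeightedAverage

variable {α : Type*} [MeasurableSpace α] {μ : Measure α} {γ a b : α → ℝ}

lemma integral_sub_mul_of_integral_eq_one (hγ : Integrable γ μ) (hγ_one : ∫ y, γ y ∂μ = 1)
    (hb : Integrable (fun y => b y * γ y) μ) (c : ℝ) :
    ∫ y, (c - b y) * γ y ∂μ = c - ∫ y, b y * γ y ∂μ := by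
  simp_rw [sub_mul]
  rw [integral_sub (hγ.const_mul c) hb, integral_const_mul, hγ_one, mul_one]

lemma integral_sub_mul_mul_sub_integral (hγ : Integrable γ μ) (hγ_one : ∫ y, γ y ∂μ = 1)
    (ha : Integrable (fun y => a y * γ y) μ) (hb : Integrable (fun y => b y * γ y) μ)
    (hab : Integrable (fun y => a y * b y * γ y) μ) (a₀ : ℝ) :
    ∫ y, (a y - a₀) * γ y * (b y - ∫ z, b z * γ z ∂μ) ∂μ =
      ∫ y, a y * b y * γ y ∂μ - (∫ y, a y * γ y ∂μ) * ∫ y, b y * γ y ∂μ := by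
  set B := ∫ z, b z * γ z ∂μ
  have hb_centered : ∫ y, (B - b y) * γ y ∂μ = 0 := by
    rw [integral_sub_mul_of_integral_eq_one hγ hγ_one hb, sub_self]
  have h_split : (fun y => (a y - a₀) * γ y * (b y - B)) =
      fun y => (a y * b y * γ y - B * (a y * γ y)) + a₀ * ((B - b y) * γ y) := by
    funext y; ring
  have h_centered_int : Integrable (fun y => (B - b y) * γ y) μ :=
    ((hγ.const_mul B).sub hb).congr (.of_forall fun y => by simp only [Pi.sub_apply]; ring)
  have h_main_int : Integrable (fun y => a y * b y * γ y - B * (a y * γ y)) μ :=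
    hab.sub (ha.const_mul B)
  rw [h_split, integral_add h_main_int (h_centered_int.const_mul a₀),
    integral_const_mul a₀, hb_centered, integral_sub hab (ha.const_mul B), integral_const_mul]
  ring

theorem integral_mul_mul_sub_integral_mul_eq_integral_integral (hγ : Integrable γ μ)
    (hγ_one : ∫ y, γ y ∂μ = 1) (ha : Integrable (fun y => a y * γ y) μ)
    (hb : Integrable (fun y => b y * γ y) μ) (hab : Integrable (fun y => a y * b y * γ y) μ)
    (a₀ : ℝ) :
    ∫ y, a y * b y * γ y ∂μ - (∫ y, a y * γ y ∂μ) * ∫ y, b y * γ y ∂μ =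
      ∫ y, ∫ y', (a y - a₀) * γ y * ((b y - b y') * γ y') ∂μ ∂μ := by
  rw [← integral_sub_mul_mul_sub_integral hγ hγ_one ha hb hab a₀]
  congr 1 with y
  rw [integral_const_mul, integral_sub_mul_of_integral_eq_one hγ hγ_one hb]

end WeightedAverage

lemma integrable_comp_sub_mul {G : Type*} [MeasurableSpace G] [Sub G] [MeasurableSub G]
    {μ : Measure G} {γ h : G → ℝ} (hγ : Integrable γ μ) (hh : Measurable h) {C : ℝ}
    (h_bound : ∀ y, |h y| ≤ C) (x : G) :
    Integrable (fun y => h (x - y) * γ y) μ :=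
  hγ.bdd_mul (hh.comp (measurable_const_sub x)).aestronglyMeasurable
    (.of_forall fun y => h_bound (x - y))

/-- the Constantin–E–Titi commutator identity
`(fg)∗γ_ε(x) − (f∗γ_ε)(x)(g∗γ_ε)(x)
  = ∫∫ (f(x−x̄) − f(x)) γ_ε(x̄) (g(x−x̄) − g(x−x')) γ_ε(x') dx' dx̄`
for a mollifier `γ_ε` of integral one and (bounded, measurable) locally integrable `f, g`. -/
theorem mollification_commutator_identity (f g γε : E2 → ℝ)
    (hγ_int : Integrable γε) (hγ_one : ∫ y, γε y = 1)
    (hf : Measurable f) (hg : Measurable g)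
    (Cf Cg : ℝ) (hfb : ∀ x, |f x| ≤ Cf) (hgb : ∀ x, |g x| ≤ Cg) :
    ∀ x : E2,
      conv2 (fun y => f y * g y) γε x - conv2 f γε x * conv2 g γε x =
        ∫ xb, ∫ x',
          (f (x - xb) - f x) * γε xb * ((g (x - xb) - g (x - x')) * γε x') := by
  intro x
  have hfg_bound (y : E2) : |f y * g y| ≤ Cf * Cg := by
    rw [abs_mul]
    exact mul_le_mul (hfb y) (hgb y) (abs_nonneg _) ((abs_nonneg _).trans (hfb 0))
  have hfg := integrable_comp_sub_mul hγ_int (hf.mul hg) hfg_bound x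
  exact integral_mul_mul_sub_integral_mul_eq_integral_integral hγ_int hγ_one
    (integrable_comp_sub_mul hγ_int hf hfb x) (integrable_comp_sub_mul hγ_int hg hgb x) hfg (f x)
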